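/- Let η1, η2 ∈ [0,1]. Let (A_i)_{i∈I} be Kraus operators on ℂ^N with Σ_i A_i† A_i = 1 satisfying Σ_i |Tr(A_i F)/N|² ≥ 1 − η1 (C ∈ S3(η1)), and let (B_j)_{j∈J} be Kraus operators on ℂ^N with Σ_j B_j† B_j = 1 satisfying Σ_j |Tr(F† B_j)/N|² ≥ 1 − η2 (P ∈ T3(η2)). Let d ≥ 1, β ∈ ℂ^d with Σ_k |β_k|² = 1, p : Fin d → ZMod N, and f : ZMod N → [−1,1]. For l ∈ ZMod N define: the unitary R_l = Σ_{t∈ZMod N} (e_t e_t†) ⊗ I_d ⊗ Rot(f(t−l)) on ℂ^N ⊗ ℂ^d ⊗ ℂ²; the input state |φ_{2,l}⟩ = Σ_{k∈Fin d} β_k · f_{p_k+l} ⊗ e_k ∈ ℂ^N ⊗ ℂ^d; and the target state |φ_{5,l}⟩ = Σ_k β_k · f_{p_k+l} ⊗ e_k ⊗ (f(p_k)·e_0 + √(1−f(p_k)²)·e_1). Then (1/N) Σ_{l∈ZMod N} Σ_{i∈I, j∈J} | ⟨φ_{5,l}, (B_j ⊗ I_d ⊗ I_2) R_l (A_i ⊗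 I_d ⊗ I_2) (|φ_{2,l}⟩ ⊗ e_0)⟩ |² ≥ 1 − √η1 − √η2. (This is Theorem 4.1, the exact-eigenvalue case of worst-case HHL with average-case correct QFT: the left-hand side is the average fidelity E_l[F(ρ_{5,l}, |φ_{5,l}⟩⟨φ_{5,l}|)] of the state produced when F⁻¹ is replaced by C and F by P in the HHL algorithm; since the remaining steps of the algorithm are exact unitaries, the same lower bound holds for the final output states ρ_{7,l} versus |φ_{7,l}⟩.) -/

import Mathlib

open scoped BigOperators ComplexConjugate
open Finset Matrix

/-- The `N × N` quantum Fourier transform matrix, with entries `F j k = ω^{jk} / √N`,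
where `ω = exp(2πi/N)`. -/
noncomputable def QFT (N : ℕ) [NeZero N] : Matrix (ZMod N) (ZMod N) ℂ :=
  fun j k => Complex.exp (2 * (Real.pi : ℂ) * Complex.I * (j.val : ℂ) * (k.val : ℂ) / (N : ℂ))
    / (Real.sqrt N : ℂ)

/-- The 2×2 rotation `Rot(c)` with columns `(c, √(1−c²))` and `(−√(1−c²), c)`. -/
noncomputable def Rot (c : ℝ) : Matrix (Fin 2) (Fin 2) ℂ :=
  !![(c : ℂ), (-(Real.sqrt (1 - c ^ 2)) : ℝ); ((Real.sqrt (1 - c ^ 2) : ℝ) : ℂ), (c : ℂ)]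

/-- `M ⊗ I_d ⊗ I_2` acting on `ℂ^N ⊗ ℂ^d ⊗ ℂ²`. -/
noncomputable def opTens (N d : ℕ) [NeZero N] (M : Matrix (ZMod N) (ZMod N) ℂ) :
    Matrix (ZMod N × Fin d × Fin 2) (ZMod N × Fin d × Fin 2) ℂ :=
  fun q q' => if q.2 = q'.2 then M q.1 q'.1 else 0

/-- The controlled rotation `Σ_t (e_t e_t†) ⊗ I_d ⊗ Rot(g t)`. -/
noncomputable def ctrlRot (N d : ℕ) [NeZero N] (g : ZMod N → ℝ) :
    Matrix (ZMod N × Fin d × Fin 2) (ZMod N × Fin d × Fin 2) ℂ :=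
  fun q q' => if q.1 = q'.1 ∧ q.2.1 = q'.2.1 then Rot (g q.1) q.2.2 q'.2.2 else 0

/-- The state `|φ_{2,l}⟩ ⊗ e_0 = (Σ_k β_k · f_{p_k+l} ⊗ e_k) ⊗ e_0`. -/
noncomputable def phi2 (N d : ℕ) [NeZero N] (β : Fin d → ℂ) (p : Fin d → ZMod N)
    (l : ZMod N) : ZMod N × Fin d × Fin 2 → ℂ :=
  fun q => β q.2.1 * QFT N q.1 (p q.2.1 + l) * (if q.2.2 = 0 then 1 else 0)

/-- The target state
`|φ_{5,l}⟩ = Σ_k β_k · f_{p_k+l} ⊗ e_k ⊗ (f(p_k)·e_0 + √(1−f(p_k)²)·e_1)`. -/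
noncomputable def phi5 (N d : ℕ) [NeZero N] (β : Fin d → ℂ) (p : Fin d → ZMod N)
    (f : ZMod N → ℝ) (l : ZMod N) : ZMod N × Fin d × Fin 2 → ℂ :=
  fun q => β q.2.1 * QFT N q.1 (p q.2.1 + l) *
    (if q.2.2 = 0 then ((f (p q.2.1) : ℝ) : ℂ)
      else ((Real.sqrt (1 - f (p q.2.1) ^ 2) : ℝ) : ℂ))

open scoped Kronecker

/-!
Write `a_i = tr(A_i F)/N`, `b_j = tr(F† B_j)/N` and `s_l = Σ_k β_k e_{p_k+l} ⊗ e_k ⊗ e_0`.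
Then `|φ_{2,l}⟩ = (F ⊗ 1) s_l`, the controlled rotation `R_l` maps `s_l` to `r_l` with
`|φ_{5,l}⟩ = (F ⊗ 1) r_l`, and the noisy state `Ψ = (B_j ⊗ 1) R_l (A_i ⊗ 1) |φ_{2,l}⟩` splits as
`Ψ = a_i b_j φ_{5,l} + (B_j ⊗ 1) R_l ((A_i F - a_i) ⊗ 1) s_l + a_i ((B_j - b_j F) ⊗ 1) r_l`.
Averaging over the shift `l` makes the first register of `s_l` and `r_l` run through the whole
basis, so it turns `‖(M ⊗ 1) s_l‖²` into the Hilbert–Schmidt norm `‖M‖²_HS`: the two error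
terms have total squared norm `N (1 - Σ |a_i|²) ≤ N η₁` and at most `N (1 - Σ |b_j|²) ≤ N η₂`,
while `Σ ‖Ψ‖² = N` since both channels are trace preserving and `R_l` is unitary.
As `|⟨φ, Ψ⟩|² ≥ ‖Ψ‖² - ‖Ψ - c φ‖²` for a unit vector `φ`, Minkowski's inequality over all
`(l, i, j)` bounds the average fidelity below by `1 - (√η₁ + √η₂)²`, which is at least
`1 - √η₁ - √η₂` whenever the latter is positive.
-/

lemma sum_norm_add_sq_le {ι E : Type*} [Fintype ι] [SeminormedAddCommGroup E] (x y : ι → E) :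
    ∑ i, ‖x i + y i‖ ^ 2 ≤ (√(∑ i, ‖x i‖ ^ 2) + √(∑ i, ‖y i‖ ^ 2)) ^ 2 := by
  have h := norm_add_le (WithLp.toLp 2 x : PiLp 2 fun _ : ι => E) (WithLp.toLp 2 y)
  rw [← WithLp.toLp_add] at h
  simp only [PiLp.norm_eq_of_L2, Pi.add_apply] at h
  calc ∑ i, ‖x i + y i‖ ^ 2 = √(∑ i, ‖x i + y i‖ ^ 2) ^ 2 := by
        rw [Real.sq_sqrt (by positivity)]
    _ ≤ _ := by gcongr

section InnerProductSpace

variable {𝕜 E : Type*} [RCLike 𝕜] [NormedAddCommGroup E] [InnerProductSpace 𝕜 E]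

lemma norm_sq_sub_norm_sub_smul_sq_le {φ : E} (hφ : ‖φ‖ = 1) (ψ : E) (c : 𝕜) :
    ‖ψ‖ ^ 2 - ‖ψ - c • φ‖ ^ 2 ≤ ‖inner 𝕜 φ ψ‖ ^ 2 := by
  have h := norm_sub_sq (𝕜 := 𝕜) c (inner 𝕜 φ ψ)
  rw [norm_sub_sq (𝕜 := 𝕜), inner_smul_right, norm_smul, hφ, ← inner_conj_symm ψ φ]
  have hre : RCLike.re (inner 𝕜 φ ψ * starRingEnd 𝕜 c)
      = RCLike.re (c * starRingEnd 𝕜 (inner 𝕜 φ ψ)) := by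
    rw [← RCLike.conj_re, map_mul, RCLike.conj_conj, mul_comm]
  rw [RCLike.inner_apply, hre] at h
  nlinarith [sq_nonneg ‖c - inner 𝕜 φ ψ‖]

theorem one_sub_sqrt_sub_sqrt_le_sum_norm_inner_sq {Z : Type*} [Fintype Z]
    {φ ψ χ₁ χ₂ : Z → E} {c : Z → 𝕜} {M η₁ η₂ : ℝ} (hM : 0 < M)
    (hφ : ∀ z, ‖φ z‖ = 1) (hψ : ∑ z, ‖ψ z‖ ^ 2 = M)
    (hdecomp : ∀ z, ψ z - c z • φ z = χ₁ z + χ₂ z)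
    (hχ₁ : ∑ z, ‖χ₁ z‖ ^ 2 ≤ M * η₁) (hχ₂ : ∑ z, ‖χ₂ z‖ ^ 2 ≤ M * η₂) :
    1 - √η₁ - √η₂ ≤ (1 / M) * ∑ z, ‖inner 𝕜 (φ z) (ψ z)‖ ^ 2 := by
  set s := √η₁ + √η₂
  have hproj : M - ∑ z, ‖χ₁ z + χ₂ z‖ ^ 2 ≤ ∑ z, ‖inner 𝕜 (φ z) (ψ z)‖ ^ 2 := by
    rw [← hψ, ← sum_sub_distrib]
    gcongr with z
    rw [← hdecomp]
    exact norm_sq_sub_norm_sub_smul_sq_le (hφ z) _ _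
  have herr : ∑ z, ‖χ₁ z + χ₂ z‖ ^ 2 ≤ M * s ^ 2 := by
    calc ∑ z, ‖χ₁ z + χ₂ z‖ ^ 2 ≤ (√(M * η₁) + √(M * η₂)) ^ 2 :=
          (sum_norm_add_sq_le χ₁ χ₂).trans (by gcongr)
      _ = M * s ^ 2 := by
          rw [Real.sqrt_mul hM.le, Real.sqrt_mul hM.le, ← mul_add, mul_pow,
            Real.sq_sqrt hM.le]
  have hfid : 1 - s ^ 2 ≤ (1 / M) * ∑ z, ‖inner 𝕜 (φ z) (ψ z)‖ ^ 2 := by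
    rw [one_div, le_inv_mul_iff₀ hM]
    linarith
  have hnonneg : 0 ≤ (1 / M) * ∑ z, ‖inner 𝕜 (φ z) (ψ z)‖ ^ 2 := by positivity
  have hs : 0 ≤ s := by positivity
  rcases le_total s 1 with h | h <;> nlinarith

end InnerProductSpace

section L2

variable {n : Type*} [Fintype n]

noncomputable def l2NormSq (v : n → ℂ) : ℝ := ∑ q, ‖v q‖ ^ 2

lemma ofReal_l2NormSq (v : n → ℂ) : (l2NormSq v : ℂ) = star v ⬝ᵥ v := by
  simp [l2NormSq, dotProduct, Complex.conj_mul']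

lemma sum_l2NormSq_mulVec_of_kraus [DecidableEq n] {ι : Type*} [Fintype ι]
    {K : ι → Matrix n n ℂ} (hK : ∑ i, (K i)ᴴ * K i = 1) (x : n → ℂ) :
    ∑ i, l2NormSq (K i *ᵥ x) = l2NormSq x := by
  apply Complex.ofReal_injective
  push_cast
  simp only [ofReal_l2NormSq, star_mulVec, dotProduct_mulVec, vecMul_vecMul]
  rw [← sum_dotProduct, ← vecMul_sum, hK, vecMul_one]

lemma l2NormSq_mulVec_of_unitary [DecidableEq n] {U : Matrix n n ℂ} (hU : Uᴴ * U = 1)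
    (x : n → ℂ) : l2NormSq (U *ᵥ x) = l2NormSq x := by
  simpa using sum_l2NormSq_mulVec_of_kraus (K := fun _ : Unit => U) (by simpa using hU) x

lemma l2NormSq_single [DecidableEq n] (i : n) : l2NormSq (Pi.single i (1 : ℂ)) = 1 := by
  simp [l2NormSq, Pi.single_apply, apply_ite]

lemma l2NormSq_smul (c : ℂ) (v : n → ℂ) :
    l2NormSq (c • v) = ‖c‖ ^ 2 * l2NormSq v := by
  simp [l2NormSq, mul_sum, mul_pow]

lemma norm_toLp_sq (v : n → ℂ) :
    ‖(WithLp.toLp 2 v : EuclideanSpace ℂ n)‖ ^ 2 = l2NormSq v := by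
  simp [EuclideanSpace.norm_sq_eq, l2NormSq]

end L2

theorem one_sub_sqrt_sub_sqrt_le_sum_norm_sum_conj_mul_sq {Z n : Type*} [Fintype Z] [Fintype n]
    {φ ψ χ₁ χ₂ : Z → n → ℂ} {c : Z → ℂ} {M η₁ η₂ : ℝ} (hM : 0 < M)
    (hφ : ∀ z, l2NormSq (φ z) = 1) (hψ : ∑ z, l2NormSq (ψ z) = M)
    (hdecomp : ∀ z, ψ z - c z • φ z = χ₁ z + χ₂ z)
    (hχ₁ : ∑ z, l2NormSq (χ₁ z) ≤ M * η₁) (hχ₂ : ∑ z, l2NormSq (χ₂ z) ≤ M * η₂) :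
    1 - √η₁ - √η₂ ≤ (1 / M) * ∑ z, ‖∑ q, starRingEnd ℂ (φ z q) * ψ z q‖ ^ 2 := by
  have h := one_sub_sqrt_sub_sqrt_le_sum_norm_inner_sq (𝕜 := ℂ)
    (φ := fun z => (WithLp.toLp 2 (φ z) : EuclideanSpace ℂ n)) (ψ := fun z => WithLp.toLp 2 (ψ z))
    (χ₁ := fun z => WithLp.toLp 2 (χ₁ z)) (χ₂ := fun z => WithLp.toLp 2 (χ₂ z)) (c := c) hM
    (fun z => by rw [← pow_eq_one_iff_of_nonneg (norm_nonneg _) two_ne_zero, norm_toLp_sq, hφ])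
    (by simpa only [norm_toLp_sq] using hψ)
    (fun z => by rw [← WithLp.toLp_smul, ← WithLp.toLp_sub, ← WithLp.toLp_add, hdecomp])
    (by simpa only [norm_toLp_sq] using hχ₁) (by simpa only [norm_toLp_sq] using hχ₂)
  simpa only [EuclideanSpace.inner_toLp_toLp, dotProduct, Pi.star_apply, Complex.star_def,
    mul_comm] using h

/-- `Σ_k β_k • u_k ⊗ e_k ⊗ w_k`, as a vector indexed by `α × κ × γ`. -/
noncomputable def tensorSum {α κ γ : Type*} (β : κ → ℂ) (u : κ → α → ℂ) (w : κ → γ → ℂ) :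
    α × κ × γ → ℂ :=
  fun q => β q.2.1 * u q.2.1 q.1 * w q.2.1 q.2.2

lemma l2NormSq_tensorSum {α κ γ : Type*} [Fintype α] [Fintype κ] [Fintype γ] (β : κ → ℂ)
    (u : κ → α → ℂ) (w : κ → γ → ℂ) :
    l2NormSq (tensorSum β u w) = ∑ k, ‖β k‖ ^ 2 * l2NormSq (u k) * l2NormSq (w k) := by
  simp only [l2NormSq, tensorSum, Fintype.sum_prod_type, norm_mul, mul_pow, mul_sum, sum_mul]
  rw [sum_comm]
  exact sum_congr rfl fun k _ => sum_comm

section HilbertSchmidt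

variable {n : Type*} [Fintype n]

noncomputable def hsNormSq {m : Type*} [Fintype m] (M : Matrix m n ℂ) : ℝ :=
  ∑ i, ∑ j, ‖M i j‖ ^ 2

lemma hsNormSq_nonneg {m : Type*} [Fintype m] (M : Matrix m n ℂ) : 0 ≤ hsNormSq M := by
  unfold hsNormSq
  positivity

lemma ofReal_hsNormSq {m : Type*} [Fintype m] (M : Matrix m n ℂ) :
    (hsNormSq M : ℂ) = (Mᴴ * M).trace := by
  simp only [hsNormSq, trace, Matrix.diag, mul_apply, conjTranspose_apply, Complex.star_def,
    Complex.conj_mul', Complex.ofReal_sum, Complex.ofReal_pow]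
  exact sum_comm

lemma sum_l2NormSq_mulVec_single [DecidableEq n] {m : Type*} [Fintype m] (M : Matrix m n ℂ) :
    ∑ j, l2NormSq (M *ᵥ Pi.single j 1) = hsNormSq M := by
  simp only [l2NormSq, hsNormSq, mulVec_single_one]
  exact sum_comm

variable [DecidableEq n] {ι : Type*} [Fintype ι] {K : ι → Matrix n n ℂ}

lemma hsNormSq_unitary_mul (M : Matrix n n ℂ) {U : Matrix n n ℂ} (hU : Uᴴ * U = 1) :
    hsNormSq (U * M) = hsNormSq M := by
  apply Complex.ofReal_injective
  rw [ofReal_hsNormSq, ofReal_hsNormSq, conjTranspose_mul, mul_assoc, ← mul_assoc Uᴴ, hU,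
    one_mul]

lemma sum_hsNormSq_of_kraus (hK : ∑ i, (K i)ᴴ * K i = 1) :
    ∑ i, hsNormSq (K i) = Fintype.card n := by
  apply Complex.ofReal_injective
  push_cast
  simp only [ofReal_hsNormSq, ← trace_sum, hK, trace_one]

lemma hsNormSq_sub_smul_one (M : Matrix n n ℂ) {a : ℂ} (ha : M.trace = Fintype.card n * a) :
    hsNormSq (M - a • 1) = hsNormSq M - Fintype.card n * ‖a‖ ^ 2 := by
  apply Complex.ofReal_injective
  push_cast
  simp only [ofReal_hsNormSq, conjTranspose_sub, conjTranspose_smul, conjTranspose_one,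
    sub_mul, mul_sub, smul_mul_assoc, mul_smul_comm, mul_one, one_mul, trace_sub, trace_smul,
    trace_conjTranspose, trace_one, ha, smul_eq_mul, star_mul', Complex.star_def, map_natCast]
  rw [← Complex.conj_mul']
  ring

lemma sum_hsNormSq_sub_smul_one_of_kraus [Nonempty n] (hK : ∑ i, (K i)ᴴ * K i = 1) :
    ∑ i, hsNormSq (K i - ((K i).trace / Fintype.card n) • 1)
      = Fintype.card n * (1 - ∑ i, ‖(K i).trace / Fintype.card n‖ ^ 2) := by
  have hn : (Fintype.card n : ℂ) ≠ 0 := by exact_mod_cast Fintype.card_ne_zero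
  simp only [hsNormSq_sub_smul_one _ (mul_div_cancel₀ _ hn).symm, sum_sub_distrib,
    sum_hsNormSq_of_kraus hK, mul_sub, mul_one, mul_sum]

lemma sum_norm_trace_div_card_sq_le_one_of_kraus [Nonempty n] (hK : ∑ i, (K i)ᴴ * K i = 1) :
    ∑ i, ‖(K i).trace / Fintype.card n‖ ^ 2 ≤ 1 := by
  have h := sum_hsNormSq_sub_smul_one_of_kraus hK
  have h0 : 0 ≤ ∑ i, hsNormSq (K i - ((K i).trace / Fintype.card n) • 1) :=
    sum_nonneg fun _ _ => hsNormSq_nonneg _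
  have hn : (0 : ℝ) < Fintype.card n := by exact_mod_cast Fintype.card_pos
  nlinarith

lemma kraus_mul_unitary (hK : ∑ i, (K i)ᴴ * K i = 1) {U : Matrix n n ℂ} (hU : Uᴴ * U = 1) :
    ∑ i, (K i * U)ᴴ * (K i * U) = 1 := by
  have h (i : ι) : (K i * U)ᴴ * (K i * U) = Uᴴ * ((K i)ᴴ * K i) * U := by
    simp only [conjTranspose_mul, mul_assoc]
  simp only [h, ← sum_mul, ← mul_sum, hK, mul_one, hU]

lemma kraus_conjTranspose_unitary_mul (hK : ∑ i, (K i)ᴴ * K i = 1) {U : Matrix n n ℂ}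
    (hU : U * Uᴴ = 1) : ∑ i, (Uᴴ * K i)ᴴ * (Uᴴ * K i) = 1 := by
  simp only [conjTranspose_mul, conjTranspose_conjTranspose, mul_assoc, ← mul_assoc U, hU,
    one_mul, hK]

end HilbertSchmidt

section QFT

variable {N : ℕ} [NeZero N]

lemma QFT_apply (j k : ZMod N) : QFT N j k = ZMod.stdAddChar (j * k) / (√N : ℂ) := by
  have hjk : j * k = ((j.val * k.val : ℕ) : ZMod N) := by simp
  rw [hjk, ZMod.stdAddChar_apply, ZMod.toCircle_natCast, QFT]
  push_cast
  ring_nf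

lemma QFT_conjTranspose_mul_self : (QFT N)ᴴ * QFT N = 1 := by
  ext a b
  have hN : (N : ℂ) ≠ 0 := NeZero.ne _
  have hsqrt : (√N : ℂ) * √N = N := by exact_mod_cast Real.mul_self_sqrt (Nat.cast_nonneg N)
  have hterm : ∀ t : ZMod N, star (QFT N t a) * QFT N t b
      = ZMod.stdAddChar (t * (b - a)) / N := by
    intro t
    rw [QFT_apply, QFT_apply, Complex.star_def, map_div₀, ← AddChar.map_neg_eq_conj,
      Complex.conj_ofReal, div_mul_div_comm, ← AddChar.map_add_eq_mul, hsqrt, mul_sub,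
      neg_add_eq_sub]
  simp only [mul_apply, conjTranspose_apply, hterm, ← sum_div,
    AddChar.sum_mulShift _ (ZMod.isPrimitive_stdAddChar N), ZMod.card, one_apply, sub_eq_zero]
  rcases eq_or_ne a b with rfl | h
  · simp [hN]
  · simp [h, h.symm]

lemma QFT_mul_conjTranspose_self : QFT N * (QFT N)ᴴ = 1 :=
  mul_eq_one_comm.mp QFT_conjTranspose_mul_self

end QFT

lemma Rot_conjTranspose_mul_self {c : ℝ} (hc : c ∈ Set.Icc (-1 : ℝ) 1) :
    (Rot c)ᴴ * Rot c = 1 := by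
  have hs : √(1 - c ^ 2) ^ 2 = 1 - c ^ 2 := Real.sq_sqrt (by nlinarith [hc.1, hc.2])
  have hsC : ((√(1 - c ^ 2) : ℝ) : ℂ) ^ 2 = 1 - (c : ℂ) ^ 2 := by exact_mod_cast hs
  ext i j
  fin_cases i <;> fin_cases j <;>
    simp [Rot, mul_apply, Fin.sum_univ_two, ← sq, hsC] <;> ring

section Tensor

variable {N d : ℕ} [NeZero N]

lemma opTens_eq_kronecker (M : Matrix (ZMod N) (ZMod N) ℂ) : opTens N d M = M ⊗ₖ 1 := by
  ext ⟨t, s⟩ ⟨t', s'⟩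
  simp [opTens, one_apply]

lemma opTens_mul (M M' : Matrix (ZMod N) (ZMod N) ℂ) :
    opTens N d (M * M') = opTens N d M * opTens N d M' := by
  simp [opTens_eq_kronecker, ← mul_kronecker_mul]

lemma opTens_sub_smul (M M' : Matrix (ZMod N) (ZMod N) ℂ) (c : ℂ) :
    opTens N d (M - c • M') = opTens N d M - c • opTens N d M' := by
  ext q q'
  simp only [opTens, Matrix.sub_apply, Matrix.smul_apply]
  split_ifs <;> simp

lemma opTens_one : opTens N d (1 : Matrix (ZMod N) (ZMod N) ℂ) = 1 := by
  simp [opTens_eq_kronecker]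

lemma conjTranspose_opTens (M : Matrix (ZMod N) (ZMod N) ℂ) :
    (opTens N d M)ᴴ = opTens N d Mᴴ := by
  simp [opTens_eq_kronecker, conjTranspose_kronecker]

lemma opTens_sum {ι : Type*} [Fintype ι] (M : ι → Matrix (ZMod N) (ZMod N) ℂ) :
    opTens N d (∑ i, M i) = ∑ i, opTens N d (M i) := by
  ext q q'
  simp only [opTens, Matrix.sum_apply]
  split_ifs <;> simp

lemma opTens_conjTranspose_mul_self {U : Matrix (ZMod N) (ZMod N) ℂ} (hU : Uᴴ * U = 1) :
    (opTens N d U)ᴴ * opTens N d U = 1 := by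
  rw [conjTranspose_opTens, ← opTens_mul, hU, opTens_one]

lemma sum_opTens_conjTranspose_mul_self {ι : Type*} [Fintype ι]
    {K : ι → Matrix (ZMod N) (ZMod N) ℂ} (hK : ∑ i, (K i)ᴴ * K i = 1) :
    ∑ i, (opTens N d (K i))ᴴ * opTens N d (K i) = 1 := by
  simp only [conjTranspose_opTens, ← opTens_mul, ← opTens_sum, hK, opTens_one]

lemma opTens_mulVec_apply (M : Matrix (ZMod N) (ZMod N) ℂ) (x : ZMod N × Fin d × Fin 2 → ℂ)
    (q : ZMod N × Fin d × Fin 2) :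
    (opTens N d M *ᵥ x) q = ∑ t, M q.1 t * x (t, q.2) := by
  simp [mulVec, dotProduct, opTens, Fintype.sum_prod_type]

lemma ctrlRot_mulVec_apply (g : ZMod N → ℝ) (x : ZMod N × Fin d × Fin 2 → ℂ)
    (q : ZMod N × Fin d × Fin 2) :
    (ctrlRot N d g *ᵥ x) q = ∑ r, Rot (g q.1) q.2.2 r * x (q.1, q.2.1, r) := by
  simp [mulVec, dotProduct, ctrlRot, Fintype.sum_prod_type, ite_and]

lemma ctrlRot_conjTranspose_mul_self {g : ZMod N → ℝ} (hg : ∀ t, g t ∈ Set.Icc (-1 : ℝ) 1) :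
    (ctrlRot N d g)ᴴ * ctrlRot N d g = 1 := by
  ext ⟨t, k, r⟩ ⟨t', k', r'⟩
  have h := congrFun₂ (Rot_conjTranspose_mul_self (hg t)) r r'
  simp only [mul_apply, conjTranspose_apply, ctrlRot, Fintype.sum_prod_type] at h ⊢
  rcases em (t = t' ∧ k = k') with ⟨rfl, rfl⟩ | htk
  · simpa [ite_and, apply_ite star, one_apply, Fin.sum_univ_two] using h
  · simp [ite_and, apply_ite star, one_apply]
    grind

lemma opTens_mulVec_tensorSum (M : Matrix (ZMod N) (ZMod N) ℂ) (β : Fin d → ℂ)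
    (u : Fin d → ZMod N → ℂ) (w : Fin d → Fin 2 → ℂ) :
    opTens N d M *ᵥ tensorSum β u w = tensorSum β (fun k => M *ᵥ u k) w := by
  funext q
  rw [opTens_mulVec_apply]
  simp only [tensorSum, mulVec, dotProduct, mul_sum, sum_mul]
  exact sum_congr rfl fun t _ => by ring

lemma ctrlRot_mulVec_tensorSum (g : ZMod N → ℝ) (β : Fin d → ℂ) (c : Fin d → ZMod N)
    (w : Fin d → Fin 2 → ℂ) :
    ctrlRot N d g *ᵥ tensorSum β (fun k => Pi.single (c k) 1) w
      = tensorSum β (fun k => Pi.single (c k) 1) (fun k => Rot (g (c k)) *ᵥ w k) := by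
  funext ⟨t, k, r⟩
  rw [ctrlRot_mulVec_apply]
  by_cases ht : t = c k
  · subst ht
    simp [tensorSum, mulVec, dotProduct]
    ring
  · simp [tensorSum, ht]

end Tensor

section HHLStates

variable {N d : ℕ} [NeZero N] (β : Fin d → ℂ) (p : Fin d → ZMod N)

lemma phi2_eq_opTens_mulVec_tensorSum (l : ZMod N) :
    phi2 N d β p l = opTens N d (QFT N) *ᵥ
      tensorSum β (fun k => Pi.single (p k + l) 1) (fun _ => Pi.single 0 1) := by
  funext q
  simp [opTens_mulVec_tensorSum, phi2, tensorSum, Pi.single_apply]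

lemma phi5_eq_opTens_mulVec_tensorSum (f : ZMod N → ℝ) (l : ZMod N) :
    phi5 N d β p f l = opTens N d (QFT N) *ᵥ
      tensorSum β (fun k => Pi.single (p k + l) 1) (fun k => Rot (f (p k)) *ᵥ Pi.single 0 1) := by
  funext ⟨t, k, r⟩
  rw [opTens_mulVec_tensorSum]
  fin_cases r <;> simp [phi5, tensorSum, Rot]

variable {β}

lemma l2NormSq_phi5 (hβ : ∑ k, ‖β k‖ ^ 2 = 1) {f : ZMod N → ℝ}
    (hf : ∀ t, f t ∈ Set.Icc (-1 : ℝ) 1) (l : ZMod N) : l2NormSq (phi5 N d β p f l) = 1 := by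
  rw [phi5_eq_opTens_mulVec_tensorSum, opTens_mulVec_tensorSum, l2NormSq_tensorSum, ← hβ]
  refine sum_congr rfl fun k _ => ?_
  rw [l2NormSq_mulVec_of_unitary QFT_conjTranspose_mul_self,
    l2NormSq_mulVec_of_unitary (Rot_conjTranspose_mul_self (hf _))]
  simp only [l2NormSq_single, mul_one]

lemma sum_l2NormSq_opTens_mulVec_tensorSum (hβ : ∑ k, ‖β k‖ ^ 2 = 1)
    {w : Fin d → Fin 2 → ℂ} (hw : ∀ k, l2NormSq (w k) = 1) (M : Matrix (ZMod N) (ZMod N) ℂ) :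
    ∑ l, l2NormSq (opTens N d M *ᵥ tensorSum β (fun k => Pi.single (p k + l) 1) w)
      = hsNormSq M := by
  have hshift (c : ZMod N) : ∑ l, l2NormSq (M *ᵥ Pi.single (c + l) 1) = hsNormSq M := by
    rw [← sum_l2NormSq_mulVec_single]
    exact Equiv.sum_comp (Equiv.addLeft c) fun m => l2NormSq (M *ᵥ Pi.single m 1)
  simp only [opTens_mulVec_tensorSum, l2NormSq_tensorSum, hw, mul_one]
  rw [sum_comm]
  simp only [← mul_sum, hshift, ← sum_mul, hβ, one_mul]

end HHLStates

section HHL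

variable {N d : ℕ} [NeZero N] {β : Fin d → ℂ} (p : Fin d → ZMod N) {f : ZMod N → ℝ}

lemma ctrlRot_shift_mulVec_tensorSum (l : ZMod N) :
    ctrlRot N d (fun t => f (t - l)) *ᵥ
        tensorSum β (fun k => Pi.single (p k + l) 1) (fun _ => Pi.single 0 1)
      = tensorSum β (fun k => Pi.single (p k + l) 1) (fun k => Rot (f (p k)) *ᵥ Pi.single 0 1) := by
  simp [ctrlRot_mulVec_tensorSum]

lemma hhl_output_sub_smul_phi5 (Ai Bj : Matrix (ZMod N) (ZMod N) ℂ) (a b : ℂ) (l : ZMod N) :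
    opTens N d Bj *ᵥ (ctrlRot N d (fun t => f (t - l)) *ᵥ (opTens N d Ai *ᵥ phi2 N d β p l))
        - (a * b) • phi5 N d β p f l
      = opTens N d Bj *ᵥ (ctrlRot N d (fun t => f (t - l)) *ᵥ (opTens N d (Ai * QFT N - a • 1) *ᵥ
          tensorSum β (fun k => Pi.single (p k + l) 1) (fun _ => Pi.single 0 1)))
        + a • (opTens N d (Bj - b • QFT N) *ᵥ tensorSum β (fun k => Pi.single (p k + l) 1)
          (fun k => Rot (f (p k)) *ᵥ Pi.single 0 1)) := by
  rw [phi2_eq_opTens_mulVec_tensorSum, phi5_eq_opTens_mulVec_tensorSum, opTens_sub_smul,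
    opTens_sub_smul, opTens_mul, opTens_one]
  simp only [sub_mulVec, smul_mulVec, one_mulVec, mulVec_sub, mulVec_smul, ← mulVec_mulVec,
    ctrlRot_shift_mulVec_tensorSum, smul_sub, smul_smul]
  abel

variable {I J : Type*} [Fintype I] [Fintype J] {A : I → Matrix (ZMod N) (ZMod N) ℂ}
  {B : J → Matrix (ZMod N) (ZMod N) ℂ}

lemma sum_l2NormSq_hhl_output (hA : ∑ i, (A i)ᴴ * A i = 1) (hB : ∑ j, (B j)ᴴ * B j = 1)
    (hβ : ∑ k, ‖β k‖ ^ 2 = 1) (hf : ∀ t, f t ∈ Set.Icc (-1 : ℝ) 1) (l : ZMod N) :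
    ∑ i, ∑ j, l2NormSq (opTens N d (B j) *ᵥ
      (ctrlRot N d (fun t => f (t - l)) *ᵥ (opTens N d (A i) *ᵥ phi2 N d β p l))) = 1 := by
  rw [phi2_eq_opTens_mulVec_tensorSum]
  simp only [sum_l2NormSq_mulVec_of_kraus (sum_opTens_conjTranspose_mul_self hB),
    l2NormSq_mulVec_of_unitary (ctrlRot_conjTranspose_mul_self fun t => hf (t - l)),
    sum_l2NormSq_mulVec_of_kraus (sum_opTens_conjTranspose_mul_self hA),
    l2NormSq_mulVec_of_unitary (opTens_conjTranspose_mul_self QFT_conjTranspose_mul_self),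
    l2NormSq_tensorSum, l2NormSq_single, mul_one, hβ]

lemma sum_l2NormSq_inverseQFT_error (hA : ∑ i, (A i)ᴴ * A i = 1) (hB : ∑ j, (B j)ᴴ * B j = 1)
    (hβ : ∑ k, ‖β k‖ ^ 2 = 1) (hf : ∀ t, f t ∈ Set.Icc (-1 : ℝ) 1) :
    ∑ l, ∑ i, ∑ j, l2NormSq (opTens N d (B j) *ᵥ (ctrlRot N d (fun t => f (t - l)) *ᵥ
        (opTens N d (A i * QFT N - ((A i * QFT N).trace / N) • 1) *ᵥ
          tensorSum β (fun k => Pi.single (p k + l) 1) (fun _ => Pi.single 0 1))))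
      = N * (1 - ∑ i, ‖(A i * QFT N).trace / N‖ ^ 2) := by
  simp only [sum_l2NormSq_mulVec_of_kraus (sum_opTens_conjTranspose_mul_self hB),
    l2NormSq_mulVec_of_unitary (ctrlRot_conjTranspose_mul_self fun t => hf (t - _))]
  rw [sum_comm]
  have h := sum_hsNormSq_sub_smul_one_of_kraus (kraus_mul_unitary hA QFT_conjTranspose_mul_self)
  rw [ZMod.card] at h
  simp only [sum_l2NormSq_opTens_mulVec_tensorSum p hβ (fun _ => l2NormSq_single 0), h]

lemma sum_l2NormSq_QFT_error (hB : ∑ j, (B j)ᴴ * B j = 1)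
    (hβ : ∑ k, ‖β k‖ ^ 2 = 1) (hf : ∀ t, f t ∈ Set.Icc (-1 : ℝ) 1) (a : I → ℂ) :
    ∑ l, ∑ i, ∑ j, l2NormSq (a i • (opTens N d (B j - (((QFT N)ᴴ * B j).trace / N) • QFT N) *ᵥ
          tensorSum β (fun k => Pi.single (p k + l) 1) (fun k => Rot (f (p k)) *ᵥ Pi.single 0 1)))
      = (∑ i, ‖a i‖ ^ 2) * (N * (1 - ∑ j, ‖((QFT N)ᴴ * B j).trace / N‖ ^ 2)) := by
  have hw (k : Fin d) : l2NormSq (Rot (f (p k)) *ᵥ Pi.single 0 1) = 1 := by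
    rw [l2NormSq_mulVec_of_unitary (Rot_conjTranspose_mul_self (hf _)), l2NormSq_single]
  have hFB (j : J) : hsNormSq (B j - (((QFT N)ᴴ * B j).trace / N) • QFT N)
      = hsNormSq ((QFT N)ᴴ * B j - (((QFT N)ᴴ * B j).trace / N) • 1) := by
    rw [← hsNormSq_unitary_mul _ (U := (QFT N)ᴴ) (by simpa using QFT_mul_conjTranspose_self),
      mul_sub, mul_smul_comm, QFT_conjTranspose_mul_self]
  simp only [l2NormSq_smul, ← mul_sum]
  rw [sum_comm]
  simp only [← sum_mul, ← mul_sum]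
  rw [sum_comm]
  have h := sum_hsNormSq_sub_smul_one_of_kraus
    (kraus_conjTranspose_unitary_mul hB QFT_mul_conjTranspose_self)
  rw [ZMod.card] at h
  simp only [sum_l2NormSq_opTens_mulVec_tensorSum p hβ hw, hFB, h]

end HHL

theorem hhl_exact_case_general (N : ℕ) [NeZero N] (η1 η2 : ℝ)
    (I J : Type) [Fintype I] [Fintype J]
    (A : I → Matrix (ZMod N) (ZMod N) ℂ) (B : J → Matrix (ZMod N) (ZMod N) ℂ)
    (hKA : ∑ i : I, (A i)ᴴ * A i = 1) (hKB : ∑ j : J, (B j)ᴴ * B j = 1)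
    (hS3 : ∑ i : I, ‖(A i * QFT N).trace / (N : ℂ)‖ ^ 2 ≥ 1 - η1)
    (hT3 : ∑ j : J, ‖((QFT N)ᴴ * B j).trace / (N : ℂ)‖ ^ 2 ≥ 1 - η2)
    (d : ℕ) (β : Fin d → ℂ)
    (hβ : ∑ k : Fin d, ‖β k‖ ^ 2 = 1)
    (p : Fin d → ZMod N) (f : ZMod N → ℝ) (hf : ∀ t, f t ∈ Set.Icc (-1 : ℝ) 1) :
    (1 / N : ℝ) * ∑ l : ZMod N, ∑ i : I, ∑ j : J,
      ‖∑ q : ZMod N × Fin d × Fin 2,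
        (starRingEnd ℂ) (phi5 N d β p f l q) *
          ((opTens N d (B j) *ᵥ (ctrlRot N d (fun t => f (t - l)) *ᵥ
            (opTens N d (A i) *ᵥ phi2 N d β p l))) q)‖ ^ 2
      ≥ 1 - Real.sqrt η1 - Real.sqrt η2 := by
  have hN : (0 : ℝ) < N := Nat.cast_pos.mpr (NeZero.pos N)
  have ha : ∑ i, ‖(A i * QFT N).trace / N‖ ^ 2 ≤ 1 := by
    simpa only [ZMod.card] using sum_norm_trace_div_card_sq_le_one_of_kraus
      (kraus_mul_unitary hKA QFT_conjTranspose_mul_self)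
  have hb : ∑ j, ‖((QFT N)ᴴ * B j).trace / N‖ ^ 2 ≤ 1 := by
    simpa only [ZMod.card] using sum_norm_trace_div_card_sq_le_one_of_kraus
      (kraus_conjTranspose_unitary_mul hKB QFT_mul_conjTranspose_self)
  have key := one_sub_sqrt_sub_sqrt_le_sum_norm_sum_conj_mul_sq (M := N) (η₁ := η1) (η₂ := η2) hN
    (fun z : ZMod N × I × J => l2NormSq_phi5 p hβ hf z.1) ?_
    (fun z => hhl_output_sub_smul_phi5 p (A z.2.1) (B z.2.2) ((A z.2.1 * QFT N).trace / N)
      (((QFT N)ᴴ * B z.2.2).trace / N) z.1) ?_ ?_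
  · simpa only [Fintype.sum_prod_type] using key
  · simp only [Fintype.sum_prod_type, sum_l2NormSq_hhl_output p hKA hKB hβ hf]
    simp
  · simp only [Fintype.sum_prod_type, sum_l2NormSq_inverseQFT_error p hKA hKB hβ hf]
    nlinarith
  · simp only [Fintype.sum_prod_type, sum_l2NormSq_QFT_error p hKB hβ hf]
    refine (mul_le_of_le_one_left (by nlinarith) ha).trans ?_
    nlinarith

/-- Theorem 4.1 (exact-eigenvalue worst-case HHL with average-case correct QFT):
if `C ∈ S3(η1)` and `P ∈ T3(η2)`, the average fidelity of the noisy HHL state at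
step 5 against the ideal one is at least `1 − √η1 − √η2`. -/
theorem hhl_exact_case (N : ℕ) [NeZero N] (η1 η2 : ℝ)
    (hη1 : η1 ∈ Set.Icc (0 : ℝ) 1) (hη2 : η2 ∈ Set.Icc (0 : ℝ) 1)
    (I J : Type) [Fintype I] [Fintype J]
    (A : I → Matrix (ZMod N) (ZMod N) ℂ) (B : J → Matrix (ZMod N) (ZMod N) ℂ)
    (hKA : ∑ i : I, (A i)ᴴ * A i = 1) (hKB : ∑ j : J, (B j)ᴴ * B j = 1)
    (hS3 : ∑ i : I, ‖(A i * QFT N).trace / (N : ℂ)‖ ^ 2 ≥ 1 - η1)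
    (hT3 : ∑ j : J, ‖((QFT N)ᴴ * B j).trace / (N : ℂ)‖ ^ 2 ≥ 1 - η2)
    (d : ℕ) (hd : 1 ≤ d) (β : Fin d → ℂ)
    (hβ : ∑ k : Fin d, ‖β k‖ ^ 2 = 1)
    (p : Fin d → ZMod N) (f : ZMod N → ℝ) (hf : ∀ t, f t ∈ Set.Icc (-1 : ℝ) 1) :
    (1 / N : ℝ) * ∑ l : ZMod N, ∑ i : I, ∑ j : J,
      ‖∑ q : ZMod N × Fin d × Fin 2,
        (starRingEnd ℂ) (phi5 N d β p f l q) *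
          ((opTens N d (B j) *ᵥ (ctrlRot N d (fun t => f (t - l)) *ᵥ
            (opTens N d (A i) *ᵥ phi2 N d β p l))) q)‖ ^ 2
      ≥ 1 - Real.sqrt η1 - Real.sqrt η2 :=
  hhl_exact_case_general N η1 η2 I J A B hKA hKB hS3 hT3 d β hβ p f hf
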